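/- Let p₀ ≥ 5 and q ≥ 17 be integers, let a_{p₀}, a_q be integers with |a_{p₀}| ≤ 2√p₀, |a_q| ≤ 2√q, |a_q| > 9, and p₀ < q. Set d = p₀ + 1 - a_{p₀} and n = 1 - a_{p₀}·a_q - q + q·a_{p₀}. If d divides n, then n/d ≠ -(q - a_q)(1 - a_q); in particular |n/d| < (9/2)·q while |(q-a_q)(1-a_q)| > (9/2)·q. -/

import Mathlib

/-!
Squaring the Hasse-type bounds gives `a_{p₀}² ≤ 4p₀` and `a_q² ≤ 4q`; since `|a_q| ≥ 10`, the latter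
forces `|a_q| ≤ 2q/5`. On the one hand `|a_{p₀}| < 3d`, and writing `n = (1 - q) + a_{p₀}(q - a_q)`
gives `2|n| < 3q(1 + |a_{p₀}|) ≤ 9qd`, so `2|n/d| < 9q`. On the other hand `|q - a_q| ≥ 3q/5` and
`|1 - a_q| ≥ 9`, so `2|(q - a_q)(1 - a_q)| ≥ 54q/5 > 9q`. The two sizes are incompatible.
-/

lemma sq_le_four_mul_of_abs_le_two_mul_sqrt {a m : ℤ} (hm : 0 ≤ m)
    (h : (|a| : ℝ) ≤ 2 * Real.sqrt m) : a ^ 2 ≤ 4 * m := by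
  have hsq : ((a : ℝ)) ^ 2 ≤ (2 * Real.sqrt m) ^ 2 := by
    rw [← sq_abs]
    exact pow_le_pow_left₀ (abs_nonneg _) (by exact_mod_cast h) 2
  rw [mul_pow, Real.sq_sqrt (by exact_mod_cast hm)] at hsq
  exact_mod_cast (by linarith : ((a : ℝ)) ^ 2 ≤ 4 * m)

lemma abs_add_one_le_three_mul_sub {a p : ℤ} (hp : 5 ≤ p) (ha : a ^ 2 ≤ 4 * p) :
    |a| + 1 ≤ 3 * (p + 1 - a) := by
  have hsq : |a| ^ 2 ≤ 4 * p := by rwa [sq_abs]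
  have hle : a ≤ |a| := le_abs_self a
  -- The bound `4|a| ≤ 3p + 2` fails only for non-integral `|a|` between 4 and 5.
  rcases le_or_gt |a| 4 with hsmall | hlarge
  · linarith
  · nlinarith

lemma five_mul_abs_le_two_mul {b q : ℤ} (hb : b ^ 2 ≤ 4 * q) (hb9 : 9 < |b|) :
    5 * |b| ≤ 2 * q := by
  have hsq : |b| ^ 2 ≤ 4 * q := by rwa [sq_abs]
  nlinarith

lemma two_mul_abs_lt_mul {a b q d : ℤ} (hq : 0 < q) (hb : 5 * |b| ≤ 2 * q)
    (hd : |a| + 1 ≤ 3 * d) :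
    2 * |1 - a * b - q + q * a| < 9 * q * d := by
  have hqb : 2 * |q - b| ≤ 3 * q := by
    have := abs_sub q b
    rw [abs_of_pos hq] at this
    linarith
  have hsplit : |1 - a * b - q + q * a| ≤ (q - 1) + |a| * |q - b| := by
    calc |1 - a * b - q + q * a| = |(1 - q) + a * (q - b)| := by ring_nf
      _ ≤ |1 - q| + |a * (q - b)| := abs_add_le _ _
      _ = (q - 1) + |a| * |q - b| := by
        rw [abs_mul, abs_of_nonpos (by linarith)]; ring
  nlinarith [mul_le_mul_of_nonneg_left hqb (abs_nonneg a),
    mul_le_mul_of_nonneg_left hd hq.le]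

lemma mul_abs_ediv_lt {m n d c : ℤ} (hd : 0 < d) (hdvd : d ∣ n) (h : m * |n| < c * d) :
    m * |n / d| < c := by
  obtain ⟨k, rfl⟩ := hdvd
  rw [Int.mul_ediv_cancel_left _ hd.ne', abs_mul, abs_of_pos hd] at *
  exact lt_of_mul_lt_mul_right (by linarith) hd.le

lemma nine_mul_lt_two_mul_abs_mul {b q : ℤ} (hb : 5 * |b| ≤ 2 * q) (hb9 : 9 < |b|) :
    9 * q < 2 * |(q - b) * (1 - b)| := by
  have hqb : 3 * q ≤ 5 * |q - b| := by
    have := abs_sub_abs_le_abs_sub q b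
    rw [abs_of_nonneg (by linarith)] at this
    linarith
  have hb1 : 9 ≤ |1 - b| := by
    have := abs_sub_abs_le_abs_sub b 1
    rw [abs_one, abs_sub_comm] at this
    linarith
  rw [abs_mul]
  nlinarith [mul_le_mul_of_nonneg_left hb1 (abs_nonneg (q - b))]

theorem stmt_17_general (p₀ q ap₀ aq : ℤ) (hp₀ : 5 ≤ p₀) (hq : 17 ≤ q)
    (hap₀ : (|ap₀| : ℝ) ≤ 2 * Real.sqrt (p₀ : ℝ))
    (haq : (|aq| : ℝ) ≤ 2 * Real.sqrt (q : ℝ)) (haq9 : 9 < |aq|)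
    (d n : ℤ) (hd : d = p₀ + 1 - ap₀) (hn : n = 1 - ap₀ * aq - q + q * ap₀)
    (hdvd : d ∣ n) :
    n / d ≠ -(q - aq) * (1 - aq) ∧
    2 * |n / d| < 9 * q ∧ 9 * q < 2 * |(q - aq) * (1 - aq)| := by
  have haq5 := five_mul_abs_le_two_mul (sq_le_four_mul_of_abs_le_two_mul_sqrt (by linarith) haq) haq9
  have hd3 : |ap₀| + 1 ≤ 3 * d := hd ▸ abs_add_one_le_three_mul_sub hp₀
    (sq_le_four_mul_of_abs_le_two_mul_sqrt (by linarith) hap₀)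
  have hd0 : 0 < d := by linarith [abs_nonneg ap₀]
  have hquot : 2 * |n / d| < 9 * q := mul_abs_ediv_lt hd0 hdvd
    (by rw [hn]; exact two_mul_abs_lt_mul (by linarith) haq5 hd3)
  have hprod := nine_mul_lt_two_mul_abs_mul haq5 haq9
  refine ⟨fun h => ?_, hquot, hprod⟩
  rw [h, neg_mul, abs_neg] at hquot
  linarith

theorem stmt_17 (p₀ q ap₀ aq : ℤ) (hp₀ : 5 ≤ p₀) (hq : 17 ≤ q) (hpq : p₀ < q)
    (hap₀ : (|ap₀| : ℝ) ≤ 2 * Real.sqrt (p₀ : ℝ))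
    (haq : (|aq| : ℝ) ≤ 2 * Real.sqrt (q : ℝ)) (haq9 : 9 < |aq|)
    (d n : ℤ) (hd : d = p₀ + 1 - ap₀) (hn : n = 1 - ap₀ * aq - q + q * ap₀)
    (hdvd : d ∣ n) :
    n / d ≠ -(q - aq) * (1 - aq) ∧
    2 * |n / d| < 9 * q ∧ 9 * q < 2 * |(q - aq) * (1 - aq)| :=
  stmt_17_general p₀ q ap₀ aq hp₀ hq hap₀ haq haq9 d n hd hn hdvd
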